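/- Let M be an n×n real matrix of type 1 and p a positive integer with var(Mᵖ) < 1. Then var(Mᵏ) ≤ (max_{0≤r<p} var(M)ʳ) · var(Mᵖ)^{⌊k/p⌋} for every positive integer k; in particular var(Mᵏ) → 0 as k → ∞. -/
import Mathlib


open Matrix Filter Topology

/-- The column variation of a real matrix: half the maximum ℓ¹-distance
between two columns. -/
noncomputable def var {m n : ℕ} (A : Matrix (Fin m) (Fin n) ℝ) : ℝ :=
  (1/2) * ⨆ j : Fin n, ⨆ k : Fin n, ∑ i, |A i j - A i k|

lemma var_nonneg {m n : ℕ} (A : Matrix (Fin m) (Fin n) ℝ) : 0 ≤ var A := by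
  have : (0:ℝ) ≤ ⨆ j : Fin n, ⨆ k : Fin n, ∑ i, |A i j - A i k| :=
    Real.iSup_nonneg fun j => Real.iSup_nonneg fun k =>
      Finset.sum_nonneg fun i _ => abs_nonneg _
  unfold var; linarith

lemma sum_abs_le_two_var {m n : ℕ} (A : Matrix (Fin m) (Fin n) ℝ) (j k : Fin n) :
    ∑ i, |A i j - A i k| ≤ 2 * var A := by
  have h1 : ∑ i, |A i j - A i k| ≤ ⨆ k : Fin n, ∑ i, |A i j - A i k| :=
    le_ciSup (f := fun k : Fin n => ∑ i, |A i j - A i k|)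
      (Set.Finite.bddAbove (Set.finite_range _)) k
  have h2 : (⨆ k : Fin n, ∑ i, |A i j - A i k|) ≤
      ⨆ j : Fin n, ⨆ k : Fin n, ∑ i, |A i j - A i k| :=
    le_ciSup (f := fun j : Fin n => ⨆ k : Fin n, ∑ i, |A i j - A i k|)
      (Set.Finite.bddAbove (Set.finite_range _)) j
  unfold var; linarith

lemma var_le {m n : ℕ} (A : Matrix (Fin m) (Fin n) ℝ) (C : ℝ) (hC : 0 ≤ C)
    (h : ∀ j k, ∑ i, |A i j - A i k| ≤ 2 * C) : var A ≤ C := by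
  have : (⨆ j : Fin n, ⨆ k : Fin n, ∑ i, |A i j - A i k|) ≤ 2 * C :=
    Real.iSup_le (fun j => Real.iSup_le (fun k => h j k) (by linarith)) (by linarith)
  unfold var; linarith

lemma var_mul_le {n : ℕ} (A B : Matrix (Fin n) (Fin n) ℝ)
    (hB : ∀ j k, ∑ s, B s j = ∑ s, B s k) :
    var (A * B) ≤ var A * var B := by
  apply var_le _ _ (mul_nonneg (var_nonneg A) (var_nonneg B))
  intro j k
  set d : Fin n → ℝ := fun s => B s j - B s k with hd_def
  have hdsum : ∑ s, d s = 0 := by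
    simp only [hd_def, Finset.sum_sub_distrib, hB j k, sub_self]
  set dp : Fin n → ℝ := fun s => max (d s) 0 with hdp_def
  set dm : Fin n → ℝ := fun s => max (-(d s)) 0 with hdm_def
  have hdp_nonneg : ∀ s, 0 ≤ dp s := fun s => le_max_right _ _
  have hdm_nonneg : ∀ s, 0 ≤ dm s := fun s => le_max_right _ _
  have hdiff : ∀ s, dp s - dm s = d s := fun s => max_zero_sub_max_neg_zero_eq_self (d s)
  have habs : ∀ s, |d s| = dp s + dm s := by
    intro s
    rcases le_total 0 (d s) with h | h
    · simp [hdp_def, hdm_def, abs_of_nonneg h, max_eq_left h, max_eq_right (neg_nonpos.mpr h)]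
    · simp [hdp_def, hdm_def, abs_of_nonpos h, max_eq_right h,
        max_eq_left (neg_nonneg.mpr h)]
  set t : ℝ := ∑ s, dp s with ht_def
  have ht_nonneg : 0 ≤ t := Finset.sum_nonneg fun s _ => hdp_nonneg s
  have htm : ∑ s, dm s = t := by
    have h0 : ∑ s, (dp s - dm s) = 0 := by
      simp only [hdiff]; exact hdsum
    rw [Finset.sum_sub_distrib] at h0
    linarith
  have habs_sum : ∑ s, |d s| = 2 * t := by
    simp only [habs, Finset.sum_add_distrib, htm, ht_def]; ring
  have ht_le : t ≤ var B := by
    have h1 : ∑ s, |B s j - B s k| ≤ 2 * var B := sum_abs_le_two_var B j k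
    have h2 : ∑ s, |d s| ≤ 2 * var B := h1
    rw [habs_sum] at h2
    linarith
  rcases eq_or_lt_of_le ht_nonneg with ht0 | ht0
  · -- t = 0 : the two columns of B are equal
    have hd0 : ∀ s, d s = 0 := by
      intro s
      have hp0 : dp s = 0 :=
        (Finset.sum_eq_zero_iff_of_nonneg (fun s _ => hdp_nonneg s)).mp ht0.symm s
          (Finset.mem_univ s)
      have hm0 : dm s = 0 :=
        (Finset.sum_eq_zero_iff_of_nonneg (fun s _ => hdm_nonneg s)).mp
          (htm.trans ht0.symm) s (Finset.mem_univ s)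
      have := hdiff s; rw [hp0, hm0] at this; linarith
    have hcol : ∀ i, (A * B) i j = (A * B) i k := by
      intro i
      simp only [Matrix.mul_apply]
      apply Finset.sum_congr rfl
      intro s _
      have hB' : B s j = B s k := by have := hd0 s; simp only [hd_def] at this; linarith
      rw [hB']
    have hz : ∑ i, |(A * B) i j - (A * B) i k| = 0 := by
      apply Finset.sum_eq_zero; intro i _; rw [hcol i]; simp
    rw [hz]
    have := var_nonneg A; have := var_nonneg B
    nlinarith
  · -- t > 0
    have key : ∀ i, ∑ s, ∑ u, dp s * dm u * (A i s - A i u)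
        = t * ((A * B) i j - (A * B) i k) := by
      intro i
      have inner : ∀ s, ∑ u, dp s * dm u * (A i s - A i u)
          = dp s * A i s * t - dp s * ∑ u, dm u * A i u := by
        intro s
        have : ∑ u, dp s * dm u * (A i s - A i u)
            = ∑ u, (dp s * A i s * dm u - dp s * (dm u * A i u)) := by
          apply Finset.sum_congr rfl; intro u _; ring
        rw [this, Finset.sum_sub_distrib, ← Finset.mul_sum, ← Finset.mul_sum, htm]
      have e2 : (A * B) i j - (A * B) i k = ∑ s, A i s * d s := by
        simp only [Matrix.mul_apply, hd_def, ← Finset.sum_sub_distrib]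
        apply Finset.sum_congr rfl; intro s _; ring
      have e3 : ∑ s, A i s * d s = ∑ s, dp s * A i s - ∑ s, dm s * A i s := by
        rw [← Finset.sum_sub_distrib]
        apply Finset.sum_congr rfl; intro s _
        rw [← hdiff s]; ring
      calc ∑ s, ∑ u, dp s * dm u * (A i s - A i u)
          = ∑ s, (dp s * A i s * t - dp s * ∑ u, dm u * A i u) := by
            apply Finset.sum_congr rfl; intro s _; exact inner s
        _ = (∑ s, dp s * A i s) * t - (∑ s, dp s) * ∑ u, dm u * A i u := by
            rw [Finset.sum_sub_distrib, Finset.sum_mul, Finset.sum_mul]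
        _ = t * ((A * B) i j - (A * B) i k) := by
            rw [e2, e3, ← ht_def]; ring
    have keydiv : ∀ i, (A * B) i j - (A * B) i k
        = (1/t) * ∑ s, ∑ u, dp s * dm u * (A i s - A i u) := by
      intro i
      rw [key i]
      field_simp
    calc ∑ i, |(A * B) i j - (A * B) i k|
        = ∑ i, (1/t) * |∑ s, ∑ u, dp s * dm u * (A i s - A i u)| := by
          apply Finset.sum_congr rfl; intro i _
          rw [keydiv i, abs_mul, abs_of_pos (by positivity : (0:ℝ) < 1/t)]
      _ ≤ ∑ i, (1/t) * ∑ s, ∑ u, dp s * dm u * |A i s - A i u| := by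
          apply Finset.sum_le_sum; intro i _
          apply mul_le_mul_of_nonneg_left _ (by positivity)
          calc |∑ s, ∑ u, dp s * dm u * (A i s - A i u)|
              ≤ ∑ s, |∑ u, dp s * dm u * (A i s - A i u)| := Finset.abs_sum_le_sum_abs _ _
            _ ≤ ∑ s, ∑ u, dp s * dm u * |A i s - A i u| := by
                apply Finset.sum_le_sum; intro s _
                calc |∑ u, dp s * dm u * (A i s - A i u)|
                    ≤ ∑ u, |dp s * dm u * (A i s - A i u)| := Finset.abs_sum_le_sum_abs _ _
                  _ = ∑ u, dp s * dm u * |A i s - A i u| := by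
                      apply Finset.sum_congr rfl; intro u _
                      rw [abs_mul, abs_mul, abs_of_nonneg (hdp_nonneg s),
                        abs_of_nonneg (hdm_nonneg u)]
      _ = (1/t) * ∑ s, ∑ u, dp s * dm u * (∑ i, |A i s - A i u|) := by
          rw [← Finset.mul_sum]
          apply congrArg
          rw [Finset.sum_comm]
          apply Finset.sum_congr rfl; intro s _
          rw [Finset.sum_comm]
          apply Finset.sum_congr rfl; intro u _
          rw [Finset.mul_sum]
      _ ≤ (1/t) * ∑ s, ∑ u, dp s * dm u * (2 * var A) := by
          apply mul_le_mul_of_nonneg_left _ (by positivity)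
          apply Finset.sum_le_sum; intro s _
          apply Finset.sum_le_sum; intro u _
          exact mul_le_mul_of_nonneg_left (sum_abs_le_two_var A s u)
            (mul_nonneg (hdp_nonneg s) (hdm_nonneg u))
      _ = (1/t) * (t * (t * (2 * var A))) := by
          apply congrArg
          have inner2 : ∀ s, ∑ u, dp s * dm u * (2 * var A)
              = dp s * (t * (2 * var A)) := by
            intro s
            have : ∑ u, dp s * dm u * (2 * var A)
                = ∑ u, dp s * (dm u * (2 * var A)) := by
              apply Finset.sum_congr rfl; intro u _; ring
            rw [this, ← Finset.mul_sum, ← Finset.sum_mul, htm]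
          calc ∑ s, ∑ u, dp s * dm u * (2 * var A)
              = ∑ s, dp s * (t * (2 * var A)) := by
                apply Finset.sum_congr rfl; intro s _; exact inner2 s
            _ = t * (t * (2 * var A)) := by rw [← Finset.sum_mul, ← ht_def]
      _ ≤ 2 * (var A * var B) := by
          have hAv := var_nonneg A
          rw [one_div, inv_mul_eq_div, show t * (t * (2 * var A)) / t
            = t * (2 * var A) by field_simp]
          nlinarith [ht_le]

lemma pow_type {n : ℕ} (M : Matrix (Fin n) (Fin n) ℝ)
    (hM : ∀ k, ∑ i, M i k = 1) (q : ℕ) : ∀ k, ∑ i, (M ^ q) i k = 1 := by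
  induction q with
  | zero =>
    intro k
    simp [Matrix.one_apply]
  | succ q ih =>
    intro k
    rw [pow_succ]
    simp only [Matrix.mul_apply]
    rw [Finset.sum_comm]
    calc ∑ s, ∑ i, (M ^ q) i s * M s k
        = ∑ s, (∑ i, (M ^ q) i s) * M s k := by
          apply Finset.sum_congr rfl; intro s _; rw [Finset.sum_mul]
      _ = ∑ s, M s k := by
          apply Finset.sum_congr rfl; intro s _; rw [ih s, one_mul]
      _ = 1 := hM k

lemma var_pow_le {n : ℕ} (M : Matrix (Fin n) (Fin n) ℝ)
    (hM : ∀ k, ∑ i, M i k = 1) (q : ℕ) (hq : 1 ≤ q) :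
    var (M ^ q) ≤ var M ^ q := by
  induction q with
  | zero => omega
  | succ q ih =>
    rcases Nat.eq_or_lt_of_le hq with h1 | h1
    · simp [← h1]
    · have hq' : 1 ≤ q := by omega
      rw [pow_succ, pow_succ]
      calc var (M ^ q * M) ≤ var (M ^ q) * var M :=
            var_mul_le _ _ (fun j k => by rw [hM j, hM k])
        _ ≤ var M ^ q * var M :=
            mul_le_mul_of_nonneg_right (ih hq') (var_nonneg M)

theorem stmt7 {n : ℕ} (M : Matrix (Fin n) (Fin n) ℝ)
    (hM : ∀ k, ∑ i, M i k = 1) (p : ℕ) (hp : 0 < p)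
    (hvar : var (M ^ p) < 1) :
    (∀ k : ℕ, 0 < k →
      var (M ^ k) ≤
        ((Finset.range p).sup' (Finset.nonempty_range_iff.mpr hp.ne')
            fun r => (var M) ^ r) * (var (M ^ p)) ^ (k / p)) ∧
    Tendsto (fun k : ℕ => var (M ^ k)) atTop (𝓝 0) := by
  set C : ℝ := (Finset.range p).sup' (Finset.nonempty_range_iff.mpr hp.ne')
      fun r => (var M) ^ r with hC_def
  have hC1 : 1 ≤ C := by
    have : (var M) ^ (0:ℕ) ≤ C :=
      Finset.le_sup' (fun r => (var M) ^ r) (Finset.mem_range.mpr hp)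
    simpa using this
  have hs0 : 0 ≤ var (M ^ p) := var_nonneg _
  have hMp_type : ∀ k, ∑ i, (M ^ p) i k = 1 := pow_type M hM p
  have main : ∀ k : ℕ, 0 < k → var (M ^ k) ≤ C * (var (M ^ p)) ^ (k / p) := by
    intro k hk
    set q : ℕ := k / p with hq_def
    set r : ℕ := k % p with hr_def
    have hrp : r < p := Nat.mod_lt _ hp
    have hdecomp : M ^ k = (M ^ p) ^ q * M ^ r := by
      rw [← pow_mul, ← pow_add]
      congr 1
      rw [hq_def, hr_def]
      exact (Nat.div_add_mod k p).symm
    rcases Nat.eq_zero_or_pos q with hq0 | hq0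
    · -- q = 0, so r = k ≥ 1
      have hr1 : 1 ≤ r := by
        rcases Nat.eq_zero_or_pos r with h0 | h0
        · exfalso
          have hdm := Nat.div_add_mod k p
          rw [← hq_def, ← hr_def, hq0, h0] at hdm
          omega
        · exact h0
      have : M ^ k = M ^ r := by
        rw [hdecomp, hq0, pow_zero, one_mul]
      rw [this, hq0, pow_zero, mul_one]
      calc var (M ^ r) ≤ var M ^ r := var_pow_le M hM r hr1
        _ ≤ C := Finset.le_sup' (fun r => (var M) ^ r) (Finset.mem_range.mpr hrp)
    · rcases Nat.eq_zero_or_pos r with hr0 | hr1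
      · -- r = 0
        have : M ^ k = (M ^ p) ^ q := by rw [hdecomp, hr0, pow_zero, mul_one]
        rw [this]
        calc var ((M ^ p) ^ q) ≤ var (M ^ p) ^ q := var_pow_le _ hMp_type q hq0
          _ = 1 * var (M ^ p) ^ q := (one_mul _).symm
          _ ≤ C * var (M ^ p) ^ q :=
              mul_le_mul_of_nonneg_right hC1 (pow_nonneg hs0 q)
      · -- q ≥ 1, r ≥ 1
        rw [hdecomp]
        have h1 : var ((M ^ p) ^ q * M ^ r) ≤ var ((M ^ p) ^ q) * var (M ^ r) :=
          var_mul_le _ _ (fun j k' => by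
            rw [pow_type M hM r j, pow_type M hM r k'])
        have h2 : var ((M ^ p) ^ q) ≤ var (M ^ p) ^ q := var_pow_le _ hMp_type q hq0
        have h3 : var (M ^ r) ≤ C :=
          le_trans (var_pow_le M hM r hr1)
            (Finset.le_sup' (fun r => (var M) ^ r) (Finset.mem_range.mpr hrp))
        calc var ((M ^ p) ^ q * M ^ r) ≤ var ((M ^ p) ^ q) * var (M ^ r) := h1
          _ ≤ var (M ^ p) ^ q * C := by
              apply mul_le_mul h2 h3 (var_nonneg _) (pow_nonneg hs0 q)
          _ = C * var (M ^ p) ^ q := mul_comm _ _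
  refine ⟨main, ?_⟩
  have hdiv : Tendsto (fun k : ℕ => k / p) atTop atTop := by
    apply Filter.tendsto_atTop_atTop.mpr
    intro b
    exact ⟨b * p, fun k hk => Nat.le_div_iff_mul_le hp |>.mpr hk⟩
  have hpow : Tendsto (fun k : ℕ => (var (M ^ p)) ^ (k / p)) atTop (𝓝 0) :=
    (tendsto_pow_atTop_nhds_zero_of_lt_one hs0 hvar).comp hdiv
  have hg : Tendsto (fun k : ℕ => C * (var (M ^ p)) ^ (k / p)) atTop (𝓝 0) := by
    simpa using hpow.const_mul C
  apply squeeze_zero' (Filter.Eventually.of_forall fun k => var_nonneg _) _ hg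
  filter_upwards [Filter.eventually_ge_atTop 1] with k hk
  exact main k hk
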